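/- arXiv:1708.05845 — 3 statements merged into one kernel-verified Lean document; each statement's English description precedes it below -/
import Mathlib

section
/- Let G be a unicyclic multigraph with parallel classes of sizes t_1,…,t_{r'} on the cycle (cycle length m) and t_{m+1},…,t_{m+r''} off the cycle. The number of spanning trees of G equals (∏_{j=m+1}^{m+r''} t_j) · (∏_{i=1}^{r'} t_i) · (∑_{i=1}^{r'} 1/t_i + (m − r')). -/
/-- A subset `T` of the edges of a multigraph (given by its endpoint map `ends`)
is the edge set of a spanning tree. -/
def IsSpanningTree {V E : Type} (ends : E → Sym2 V) (T : Finset E) : Prop :=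
  Set.InjOn ends T ∧ (∀ e ∈ T, ¬ (ends e).IsDiag) ∧
    (SimpleGraph.fromEdgeSet (ends '' T)).IsTree

/-- Edge type of the unicyclic multigraph `U^r_{n,m}`: parallel classes on the `m`
cycle positions (sizes `t i`), parallel bridge classes (sizes `u j`), and `v'`
single bridges. -/
abbrev UniE (m r'' v' : ℕ) (t : Fin m → ℕ) (u : Fin r'' → ℕ) : Type :=
  (Σ i : Fin m, Fin (t i)) ⊕ (Σ j : Fin r'', Fin (u j)) ⊕ Fin v'

/-- Endpoint map: cycle classes join consecutive cycle vertices `c i, c (i+1 mod m)`,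
bridge classes have endpoints `bp j`, single bridges `sp a`. -/
def uniEnds {V : Type} (m r'' v' : ℕ) (t : Fin m → ℕ) (u : Fin r'' → ℕ)
    (c : Fin m → V) (bp : Fin r'' → Sym2 V) (sp : Fin v' → Sym2 V)
    (hm : 0 < m) : UniE m r'' v' t u → Sym2 V :=
  Sum.elim (fun e => s(c e.1, c ⟨(e.1.val + 1) % m, Nat.mod_lt _ hm⟩))
    (Sum.elim (fun e => bp e.1) sp)

/-- Endpoint pairs of the parallel classes. -/
def uniClassEnds {V : Type} (m r'' v' : ℕ)
    (c : Fin m → V) (bp : Fin r'' → Sym2 V) (sp : Fin v' → Sym2 V)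
    (hm : 0 < m) : (Fin m ⊕ Fin r'' ⊕ Fin v') → Sym2 V :=
  Sum.elim (fun i => s(c i, c ⟨(i.val + 1) % m, Nat.mod_lt _ hm⟩))
    (Sum.elim bp sp)

/-! The edges fall into parallel classes with pairwise distinct endpoint pairs, so a spanning tree
is a choice of one edge in each class of a spanning tree of the underlying simple graph, and the
spanning trees over a fixed set of classes are counted by the product of the class sizes.
The underlying simple graph is connected with as many edges as vertices; its spanning trees are
exactly the graphs obtained by deleting one of the `m` cycle edges, since no cycle edge is a bridge
while every edge of a tree is. Hence the count is `∏ u · ∑ᵢ ∏_{b ≠ i} t b`, and the cycle classes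
of size one (`i ≥ r'`) contribute the term `(m - r') · ∏_{b < r'} t b`. -/

open Finset SimpleGraph Function

theorem Nat.add_mod_ne_self {a k m : ℕ} (ha : a < m) (hk : 0 < k) (hkm : k < m) :
    (a + k) % m ≠ a := by
  intro h
  have hmod : a + k ≡ a + 0 [MOD m] := by rw [add_zero, Nat.ModEq, h, Nat.mod_eq_of_lt ha]
  have := Nat.le_of_dvd hk (Nat.modEq_zero_iff_dvd.1 (Nat.ModEq.add_left_cancel' a hmod))
  omega

theorem Finset.sum_prod_erase_eq_of_eq_one {ι M : Type*} [CommSemiring M] [DecidableEq ι]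
    {s R : Finset ι} {f : ι → M} (hR : R ⊆ s) (hf : ∀ i ∈ s \ R, f i = 1) :
    ∑ i ∈ s, ∏ b ∈ s.erase i, f b = ∑ i ∈ R, ∏ b ∈ R.erase i, f b + #(s \ R) • ∏ b ∈ R, f b := by
  rw [← sum_sdiff hR, add_comm, ← sum_const]
  congr 1
  · refine sum_congr rfl fun i hi => (prod_subset (erase_subset_erase i hR) fun b hb hbR => ?_).symm
    exact hf b (by grind)
  · refine sum_congr rfl fun i hi => (prod_subset (fun b hb => ?_) fun b hb hbR => ?_).symm
    · grind
    · exact hf b (by grind)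

theorem Finset.prod_univ_erase_inl {α β M : Type*} [Fintype α] [Fintype β] [DecidableEq α]
    [DecidableEq β] [CommMonoid M] (f : α ⊕ β → M) (a : α) :
    ∏ k ∈ univ.erase (.inl a), f k = (∏ b ∈ univ.erase a, f (.inl b)) * ∏ b, f (.inr b) := by
  rw [show univ.erase (.inl a) = (univ.erase a).disjSum (univ : Finset β) by ext (b | b) <;> simp,
    prod_disjSum]

theorem SimpleGraph.natCard_edgeSet_fromEdgeSet_image {V K : Type} {W : K → Sym2 V}
    (hW : Injective W) (hdiag : ∀ k, ¬ (W k).IsDiag) (S : Set K) :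
    Nat.card (fromEdgeSet (W '' S)).edgeSet = Nat.card S := by
  rw [edgeSet_fromEdgeSet, sdiff_eq_left.2 (Set.disjoint_left.2 ?_), Nat.card_image_of_injective hW]
  rintro _ ⟨k, -, rfl⟩
  exact hdiag k

section ParallelClasses

variable {V E K : Type} [DecidableEq K]

theorem card_injOn_image_eq [Fintype E] (cls : E → K) (S : Finset K) :
    Nat.card {T : Finset E // Set.InjOn cls T ∧ T.image cls = S} =
      ∏ k ∈ S, Nat.card {e // cls e = k} := by
  classical
  let φ : (∀ k : S, {e // cls e = k}) → {T : Finset E // Set.InjOn cls T ∧ T.image cls = S} :=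
    fun f => ⟨univ.image fun k => (f k).1, by
      rintro _ hx _ hy hxy
      obtain ⟨k, -, rfl⟩ := mem_image.1 hx
      obtain ⟨k', -, rfl⟩ := mem_image.1 hy
      rw [(f k).2, (f k').2] at hxy
      rw [Subtype.ext hxy], by
      rw [image_image]
      simp only [comp_def, (f _).2, univ_eq_attach, attach_image_val]⟩
  have hφ : Bijective φ := by
    constructor
    · intro f g hfg
      funext k
      obtain ⟨k', -, hk'⟩ := mem_image.1 <|
        (congrArg Subtype.val hfg).le (mem_image_of_mem (fun k => (f k).1) (mem_univ k))
      have hkk' : k' = k := Subtype.ext <| by rw [← (g k').2, hk', (f k).2]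
      exact Subtype.ext (hkk' ▸ hk').symm
    · rintro ⟨T, hinj, himg⟩
      have hex : ∀ k : S, ∃ e ∈ T, cls e = k := fun k => mem_image.1 (himg ▸ k.2)
      choose g hgT hgk using hex
      refine ⟨fun k => ⟨g k, hgk k⟩, Subtype.ext (Finset.ext fun e => ⟨?_, fun he => ?_⟩)⟩
      · intro hmem
        obtain ⟨k, -, rfl⟩ := mem_image.1 hmem
        exact hgT k
      · have hk : cls e ∈ S := himg ▸ mem_image_of_mem cls he
        exact mem_image.2 ⟨⟨cls e, hk⟩, mem_univ _, hinj (hgT _) he (hgk _)⟩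
  rw [← Nat.card_eq_of_bijective φ hφ, Nat.card_pi]
  exact prod_coe_sort S fun k => Nat.card {e // cls e = k}

theorem isSpanningTree_comp_iff {W : K → Sym2 V} (hW : Injective W) (hdiag : ∀ k, ¬ (W k).IsDiag)
    (cls : E → K) (T : Finset E) :
    IsSpanningTree (W ∘ cls) T ↔
      Set.InjOn cls T ∧ (fromEdgeSet (W '' (T.image cls : Set K))).IsTree := by
  rw [IsSpanningTree, coe_image, ← Set.image_comp]
  exact ⟨fun h => ⟨h.1.of_comp, h.2.2⟩, fun h => ⟨hW.comp_injOn h.1, fun e _ => hdiag _, h.2⟩⟩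

theorem card_isSpanningTree_comp [Fintype E] {W : K → Sym2 V} (hW : Injective W)
    (hdiag : ∀ k, ¬ (W k).IsDiag) (cls : E → K) (𝒮 : Finset (Finset K))
    (h𝒮 : ∀ S, S ∈ 𝒮 ↔ (fromEdgeSet (W '' (S : Set K))).IsTree) :
    Nat.card {T // IsSpanningTree (W ∘ cls) T} = ∑ S ∈ 𝒮, ∏ k ∈ S, Nat.card {e // cls e = k} := by
  classical
  calc Nat.card {T // IsSpanningTree (W ∘ cls) T}
      = #{T : Finset E | Set.InjOn cls T ∧ T.image cls ∈ 𝒮} := by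
        rw [Nat.card_eq_fintype_card, Fintype.card_subtype]
        simp only [isSpanningTree_comp_iff hW hdiag, h𝒮]
    _ = ∑ S ∈ 𝒮, #{T : Finset E | Set.InjOn cls T ∧ T.image cls = S} := by
        rw [card_eq_sum_card_fiberwise fun T hT => (mem_filter.1 hT).2.2]
        refine sum_congr rfl fun S hS => ?_
        rw [filter_filter]
        congr! 2 with T
        exact ⟨fun h => ⟨h.1.1, h.2⟩, fun h => ⟨⟨h.1, h.2 ▸ hS⟩, h.2⟩⟩
    _ = _ := sum_congr rfl fun S _ => by
        rw [← card_injOn_image_eq, Nat.card_eq_fintype_card, Fintype.card_subtype]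

end ParallelClasses

section Cycle

variable {V : Type} {m : ℕ}

def cycleSucc (hm : 0 < m) (i : Fin m) : Fin m := ⟨(i.val + 1) % m, Nat.mod_lt _ hm⟩

theorem reachable_cycleSucc {G : SimpleGraph V} {c : Fin m → V} (hm : 0 < m) (i : Fin m)
    (hadj : ∀ b ≠ i, G.Adj (c b) (c (cycleSucc hm b))) :
    G.Reachable (c (cycleSucc hm i)) (c i) := by
  -- walk forward from `i + 1`; the edge at `i` is never used and `m - 1` steps lead back to `i`
  have walk : ∀ k < m, G.Reachable (c (cycleSucc hm i)) (c ⟨(i + 1 + k) % m, Nat.mod_lt _ hm⟩) := by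
    intro k
    induction k with
    | zero => intro _; rfl
    | succ k ih =>
      intro hk
      have hb : (⟨(i + 1 + k) % m, Nat.mod_lt _ hm⟩ : Fin m) ≠ i := fun h =>
        Nat.add_mod_ne_self (k := k + 1) i.2 k.succ_pos hk <| by
          rw [← add_assoc, add_right_comm]; exact congrArg Fin.val h
      refine (ih (by omega)).trans (Adj.reachable ?_)
      convert hadj _ hb using 3
      simp only [cycleSucc, Nat.mod_add_mod, add_assoc]
  convert walk (m - 1) (by omega) using 3
  rw [add_assoc, Nat.add_sub_cancel' hm, Nat.add_mod_right, Nat.mod_eq_of_lt i.2]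

end Cycle

section Unicyclic

variable {V : Type} {m r'' v' : ℕ} {hm : 0 < m} {c : Fin m → V}
  {bp : Fin r'' → Sym2 V} {sp : Fin v' → Sym2 V}

theorem not_isDiag_uniClassEnds (hm2 : 2 ≤ m) (hc : Injective c)
    (hbp : ∀ j, ¬ (bp j).IsDiag) (hsp : ∀ a, ¬ (sp a).IsDiag) :
    ∀ k, ¬ (uniClassEnds m r'' v' c bp sp hm k).IsDiag
  | .inl i => by
    rw [uniClassEnds, Sum.elim_inl, Sym2.mk_isDiag_iff, hc.eq_iff, Fin.ext_iff]
    exact (Nat.add_mod_ne_self i.2 one_pos hm2).symm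
  | .inr (.inl j) => hbp j
  | .inr (.inr a) => hsp a

theorem not_isBridge_uniClassEnds_inl (hinj : Injective (uniClassEnds m r'' v' c bp sp hm))
    (hdiag : ∀ k, ¬ (uniClassEnds m r'' v' c bp sp hm k).IsDiag)
    {s : Set (Fin m ⊕ Fin r'' ⊕ Fin v')} (hs : ∀ b, .inl b ∈ s) (i : Fin m) :
    ¬ (fromEdgeSet (uniClassEnds m r'' v' c bp sp hm '' s)).IsBridge
      (uniClassEnds m r'' v' c bp sp hm (.inl i)) := by
  change ¬ IsBridge _ s(c i, c (cycleSucc hm i))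
  rw [isBridge_iff, not_not, deleteEdges_fromEdgeSet]
  refine (reachable_cycleSucc hm i fun b hb => ?_).symm
  rw [fromEdgeSet_adj]
  exact ⟨⟨⟨.inl b, hs b, rfl⟩, fun h => hb (Sum.inl_injective (hinj h))⟩,
    fun h => hdiag (.inl b) (Sym2.mk_isDiag_iff.2 h)⟩

theorem isTree_fromEdgeSet_uniClassEnds_iff [Fintype V]
    (hinj : Injective (uniClassEnds m r'' v' c bp sp hm))
    (hdiag : ∀ k, ¬ (uniClassEnds m r'' v' c bp sp hm k).IsDiag)
    (hconn : (fromEdgeSet (Set.range (uniClassEnds m r'' v' c bp sp hm))).Connected)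
    (hV : Fintype.card V = m + r'' + v') (S : Finset (Fin m ⊕ Fin r'' ⊕ Fin v')) :
    (fromEdgeSet (uniClassEnds m r'' v' c bp sp hm '' S)).IsTree ↔
      ∃ i, S = univ.erase (.inl i) := by
  have hK : Fintype.card (Fin m ⊕ Fin r'' ⊕ Fin v') = m + r'' + v' := by
    simp only [Fintype.card_sum, Fintype.card_fin, add_assoc]
  have hcard : ∀ k : Fin m ⊕ Fin r'' ⊕ Fin v', #(univ.erase k) + 1 = m + r'' + v' := fun k => by
    rw [card_erase_of_mem (mem_univ k), card_univ, hK]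
    omega
  have hiff : ∀ S : Finset (Fin m ⊕ Fin r'' ⊕ Fin v'),
      (fromEdgeSet (uniClassEnds m r'' v' c bp sp hm '' S)).IsTree ↔
        (fromEdgeSet (uniClassEnds m r'' v' c bp sp hm '' S)).Connected ∧ #S + 1 = m + r'' + v' :=
    fun S => by
      rw [isTree_iff_connected_and_card, SimpleGraph.natCard_edgeSet_fromEdgeSet_image hinj hdiag,
        Nat.card_eq_fintype_card (α := V), hV, Nat.card_coe_set_eq, Set.ncard_coe_finset]
  constructor
  · intro htree
    have hS := ((hiff S).1 htree).2
    obtain ⟨k, hk⟩ : ∃ k, k ∉ S := by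
      by_contra! hall
      rw [eq_univ_of_forall hall, card_univ, hK] at hS
      omega
    have hSk : S = univ.erase k :=
      eq_of_subset_of_card_le (fun x hx => mem_erase.2 ⟨ne_of_mem_of_not_mem hx hk, mem_univ x⟩)
        (by have := hcard k; omega)
    rcases k with i | k
    · exact ⟨i, hSk⟩
    · have hcyc : ∀ b : Fin m, .inl b ∈ (S : Set (Fin m ⊕ Fin r'' ⊕ Fin v')) := by
        simp [hSk]
      have hadj : (fromEdgeSet (uniClassEnds m r'' v' c bp sp hm '' S)).Adj
          (c ⟨0, hm⟩) (c (cycleSucc hm ⟨0, hm⟩)) :=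
        (fromEdgeSet_adj _).2
          ⟨⟨.inl _, hcyc _, rfl⟩, fun h => hdiag (.inl _) (Sym2.mk_isDiag_iff.2 h)⟩
      exact absurd (isAcyclic_iff_forall_adj_isBridge.1 htree.isAcyclic hadj)
        (not_isBridge_uniClassEnds_inl hinj hdiag hcyc _)
  · rintro ⟨i, rfl⟩
    refine (hiff _).2 ⟨?_, hcard _⟩
    have hnb : ¬ (fromEdgeSet (Set.range (uniClassEnds m r'' v' c bp sp hm))).IsBridge
        s(c i, c (cycleSucc hm i)) := by
      rw [← Set.image_univ]
      exact not_isBridge_uniClassEnds_inl hinj hdiag (fun _ => Set.mem_univ _) i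
    convert hconn.connected_delete_edge_of_not_isBridge hnb using 1
    rw [deleteEdges_fromEdgeSet, coe_erase, coe_univ, Set.image_sdiff hinj, Set.image_univ,
      Set.image_singleton]
    rfl

end Unicyclic

def uniClass {m r'' v' : ℕ} {t : Fin m → ℕ} {u : Fin r'' → ℕ} :
    UniE m r'' v' t u → Fin m ⊕ Fin r'' ⊕ Fin v' :=
  Sum.map Sigma.fst (Sum.map Sigma.fst id)

theorem uniEnds_eq_comp {V : Type} {m r'' v' : ℕ} {t : Fin m → ℕ} {u : Fin r'' → ℕ}
    (c : Fin m → V) (bp : Fin r'' → Sym2 V) (sp : Fin v' → Sym2 V) (hm : 0 < m) :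
    uniEnds m r'' v' t u c bp sp hm = uniClassEnds m r'' v' c bp sp hm ∘ uniClass := by
  funext e
  rcases e with e | e | e <;> rfl

theorem card_uniClass_fiber {m r'' v' : ℕ} {t : Fin m → ℕ} {u : Fin r'' → ℕ}
    (k : Fin m ⊕ Fin r'' ⊕ Fin v') :
    Nat.card {e : UniE m r'' v' t u // uniClass e = k} = Sum.elim t (Sum.elim u 1) k := by
  classical
  rw [Nat.card_eq_fintype_card, Fintype.card_subtype, card_filter, Fintype.sum_sum_type,
    Fintype.sum_sum_type, Fintype.sum_sigma, Fintype.sum_sigma]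
  rcases k with b | j | a <;> simp [uniClass, sum_ite_eq', -sum_boole]

theorem stmt3 {V : Type} [Fintype V] (m r' r'' v' : ℕ) (hm : 3 ≤ m) (hr' : r' ≤ m)
    (t : Fin m → ℕ)
    (ht1 : ∀ i : Fin m, r' ≤ i.val → t i = 1)
    (u : Fin r'' → ℕ)
    (c : Fin m → V) (hc : Function.Injective c)
    (bp : Fin r'' → Sym2 V) (sp : Fin v' → Sym2 V)
    (hbp : ∀ j, ¬ (bp j).IsDiag) (hsp : ∀ a, ¬ (sp a).IsDiag)
    (hinj : Function.Injective (uniClassEnds m r'' v' c bp sp (by omega)))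
    (hconn : (SimpleGraph.fromEdgeSet
      (Set.range (uniEnds m r'' v' t u c bp sp (by omega)))).Connected)
    (hV : Fintype.card V = m + r'' + v') :
    Nat.card {T : Finset (UniE m r'' v' t u) //
        IsSpanningTree (uniEnds m r'' v' t u c bp sp (by omega)) T} =
      (∏ j, u j) *
        ((∑ i ∈ Finset.univ.filter (fun i : Fin m => i.val < r'),
            ∏ b ∈ (Finset.univ.filter (fun b : Fin m => b.val < r')).erase i, t b) +
          (m - r') * ∏ i ∈ Finset.univ.filter (fun i : Fin m => i.val < r'), t i) := by
  have hdiag := not_isDiag_uniClassEnds (hm := by omega) (by omega) hc hbp hsp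
  rw [uniEnds_eq_comp] at hconn ⊢
  have hconn' := hconn.mono (fromEdgeSet_mono (Set.range_comp_subset_range _ _))
  rw [card_isSpanningTree_comp hinj hdiag uniClass (univ.image fun i => univ.erase (.inl i))
      fun S => by simp [isTree_fromEdgeSet_uniClassEnds_iff hinj hdiag hconn' hV, eq_comm],
    sum_image fun i _ j _ h => Sum.inl_injective ((erase_inj _ (mem_univ _)).1 h)]
  simp only [prod_univ_erase_inl, card_uniClass_fiber, Sum.elim_inl, Sum.elim_inr,
    Fintype.prod_sum_type, Pi.one_apply, prod_const_one, mul_one]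
  rw [← sum_mul, mul_comm,
    sum_prod_erase_eq_of_eq_one (filter_subset (fun i : Fin m => i.val < r') univ)
      fun i hi => ht1 i (by simpa using (mem_sdiff.1 hi).2),
    card_sdiff_of_subset (filter_subset _ _), card_univ, Fintype.card_fin, Fin.card_filter_val_lt,
    min_eq_right hr', smul_eq_mul]
end

section
/- Let Δ be the spanning simplicial complex of a connected multigraph G. A set M of edges is a minimal vertex cover of Δ (a minimal set meeting every facet) if and only if M is a minimal edge cut of G, i.e. a minimal set of edges whose removal disconnects G. -/
/-!
A set of edges meets every spanning tree iff the edges outside it do not connect the graph: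
a spanning tree avoiding `M` connects `G - M`, and conversely a spanning tree of a connected
`G - M` lifts, choosing one parallel edge per tree edge, to a spanning tree of `G` avoiding `M`.
So both families in the theorem are the minimal elements of one and the same predicate.
-/

open SimpleGraph

namespace IsSpanningTree

variable {V E : Type} {ends : E → Sym2 V}

theorem connected_of_subset {T : Finset E} {S : Set E} (hT : IsSpanningTree ends T)
    (hTS : ↑T ⊆ S) : (fromEdgeSet (ends '' S)).Connected :=
  hT.2.2.connected.mono (fromEdgeSet_mono (Set.image_mono hTS))

theorem exists_subset_of_isTree [Finite V] {S : Set E} {H : SimpleGraph V} (hH : H.IsTree)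
    (hHS : H.edgeSet ⊆ ends '' S) : ∃ T : Finset E, ↑T ⊆ S ∧ IsSpanningTree ends T := by
  obtain ⟨t, htS, hbij⟩ := Set.exists_subset_bijOn (S ∩ ends ⁻¹' H.edgeSet) ends
  have himage : ends '' (S ∩ ends ⁻¹' H.edgeSet) = H.edgeSet := by
    rw [Set.image_inter_preimage, Set.inter_eq_right.mpr hHS]
  rw [himage] at hbij
  have ht : t.Finite := Set.Finite.of_finite_image (hbij.image_eq ▸ Set.toFinite _) hbij.injOn
  refine ⟨ht.toFinset, by simpa using htS.trans Set.inter_subset_left, ?_, ?_, ?_⟩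
  · simpa using hbij.injOn
  · intro e he
    exact not_isDiag_of_mem_edgeSet H (hbij.mapsTo (by simpa using he))
  · simpa [hbij.image_eq] using hH

end IsSpanningTree

theorem forall_isSpanningTree_inter_nonempty_iff_not_connected {V E : Type} [Finite V]
    [DecidableEq E] (ends : E → Sym2 V) (M : Finset E) :
    (∀ T, IsSpanningTree ends T → (M ∩ T).Nonempty) ↔
      ¬ (fromEdgeSet (ends '' ((↑M : Set E)ᶜ))).Connected := by
  constructor
  · intro hmeet hconn
    obtain ⟨H, hle, hH⟩ := hconn.exists_isTree_le
    have hHS : H.edgeSet ⊆ ends '' (↑M : Set E)ᶜ :=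
      (edgeSet_mono hle).trans (by rw [edgeSet_fromEdgeSet]; exact Set.sdiff_subset)
    obtain ⟨T, hTM, hT⟩ := IsSpanningTree.exists_subset_of_isTree hH hHS
    obtain ⟨e, he⟩ := hmeet T hT
    rw [Finset.mem_inter] at he
    exact hTM he.2 he.1
  · intro hdisconn T hT
    by_contra hdisj
    refine hdisconn (hT.connected_of_subset fun e heT heM => hdisj ⟨e, ?_⟩)
    exact Finset.mem_inter.mpr ⟨heM, heT⟩

theorem stmt6_general {V E : Type} [Fintype V] [DecidableEq E] (ends : E → Sym2 V) :
    ∀ M : Finset E,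
      Minimal (fun M : Finset E =>
        ∀ T, IsSpanningTree ends T → (M ∩ T).Nonempty) M ↔
      Minimal (fun M : Finset E =>
        ¬ (SimpleGraph.fromEdgeSet (ends '' ((↑M : Set E)ᶜ))).Connected) M := by
  simp only [forall_isSpanningTree_inter_nonempty_iff_not_connected, implies_true]

/-- Minimal vertex covers of the spanning simplicial complex of a connected
multigraph (minimal edge sets meeting every spanning tree) are exactly the
minimal edge cuts (minimal edge sets whose removal disconnects the graph). -/
theorem stmt6 {V E : Type} [Fintype V] [Fintype E] [DecidableEq E] (ends : E → Sym2 V)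
    (hconn : (SimpleGraph.fromEdgeSet (Set.range ends)).Connected) :
    ∀ M : Finset E,
      Minimal (fun M : Finset E =>
        ∀ T, IsSpanningTree ends T → (M ∩ T).Nonempty) M ↔
      Minimal (fun M : Finset E =>
        ¬ (SimpleGraph.fromEdgeSet (ends '' ((↑M : Set E)ᶜ))).Connected) M :=
  stmt6_general ends
end

section
/- Let G be a connected multigraph whose edges partition into parallel classes of sizes t_1,…,t_k (singletons allowed) such that the underlying simple graph is a tree. Then the number of spanning trees of G equals ∏_{h=1}^{k} t_h, and the spanning simplicial complex of G is the join of k discrete sets of sizes t_1,…,t_k; in particular its Euler characteristic equals ∑_{i=0}^{k−1} (−1)^i e_{i+1}(t_1,…,t_k), where e_j denotes the j-th elementary symmetric polynomial. -/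
/-!
A tree has no proper connected spanning subgraph, so a set of edges of the multigraph is a
spanning tree exactly when it picks one edge from every parallel class, and it is a face of the
spanning complex exactly when it picks at most one edge from each class. Such a partial
transversal is the graph of a partial choice function `h ↦ Option (Fin (t h))`; those meeting
the classes in `A` are therefore counted by `∏_{h ∈ A} t h`, and grouping them by `|A| = i + 1`
yields `e_{i+1}(t₁, …, t_k)`.
-/

open Finset

namespace SimpleGraph

theorem IsAcyclic.eq_of_le_of_isTree {V : Type*} {G H : SimpleGraph V}
    (hG : G.IsAcyclic) (hH : H.IsTree) (hle : H ≤ G) : H = G :=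
  le_antisymm hle ((isTree_iff_maximal_isAcyclic.1 hH).2.2 hG hle)

theorem edgeSet_fromEdgeSet_of_forall_not_isDiag {V : Type*} {s : Set (Sym2 V)}
    (hs : ∀ e ∈ s, ¬ e.IsDiag) : (fromEdgeSet s).edgeSet = s := by
  rw [edgeSet_fromEdgeSet, sdiff_eq_left, Set.disjoint_left]
  exact hs

end SimpleGraph

theorem isSpanningTree_iff_image_eq {V E : Type} {ends : E → Sym2 V} {S : Set (Sym2 V)}
    (hends : ∀ e, ends e ∈ S) (hS : ∀ s ∈ S, ¬ s.IsDiag)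
    (htree : (SimpleGraph.fromEdgeSet S).IsTree) (T : Finset E) :
    IsSpanningTree ends T ↔ Set.InjOn ends T ∧ ends '' T = S := by
  constructor
  · rintro ⟨hinj, hloop, hT⟩
    have hle : SimpleGraph.fromEdgeSet (ends '' T) ≤ SimpleGraph.fromEdgeSet S :=
      SimpleGraph.fromEdgeSet_mono (Set.image_subset_iff.2 fun e _ => hends e)
    have heq := congrArg SimpleGraph.edgeSet (htree.isAcyclic.eq_of_le_of_isTree hT hle)
    rw [SimpleGraph.edgeSet_fromEdgeSet_of_forall_not_isDiag (by simpa using hloop),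
      SimpleGraph.edgeSet_fromEdgeSet_of_forall_not_isDiag hS] at heq
    exact ⟨hinj, heq⟩
  · rintro ⟨hinj, hT⟩
    exact ⟨hinj, fun e _ => hS _ (hends e), hT ▸ htree⟩

theorem Finset.injOn_iff_forall_card_filter_le_one {α β : Type*} [DecidableEq β] {f : α → β}
    {s : Finset α} : Set.InjOn f s ↔ ∀ b, #(s.filter (f · = b)) ≤ 1 := by
  simp only [card_le_one, mem_filter]
  exact ⟨fun h b x hx y hy => h hx.1 hy.1 (hx.2.trans hy.2.symm),
    fun h x hx y hy hxy => h _ x ⟨hx, rfl⟩ y ⟨hy, hxy.symm⟩⟩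

namespace Sigma

variable {ι : Type*} [Fintype ι] {α : ι → Type*}

def graphOf (g : ∀ i, Option (α i)) : Finset (Σ i, α i) :=
  univ.sigma fun i => (g i).toFinset

@[simp]
theorem mem_graphOf {g : ∀ i, Option (α i)} {x : Σ i, α i} :
    x ∈ graphOf g ↔ g x.1 = some x.2 := by
  simp [graphOf]

theorem graphOf_injective : Function.Injective (graphOf (α := α)) := by
  intro g g' h
  funext i
  exact Option.ext fun a => by simpa using congrArg (⟨i, a⟩ ∈ ·) h

theorem image_fst_graphOf [DecidableEq ι] (g : ∀ i, Option (α i)) :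
    (graphOf g).image Sigma.fst = univ.filter fun i => (g i).isSome := by
  ext i
  cases hg : g i <;> simp [hg, Option.isSome_iff_exists]

theorem injOn_fst_iff_exists_graphOf_eq (F : Finset (Σ i, α i)) :
    Set.InjOn Sigma.fst (F : Set (Σ i, α i)) ↔ ∃ g, graphOf g = F := by
  classical
  constructor
  · intro hF
    have : ∀ i, ∃ o : Option (α i), ∀ a, o = some a ↔ (⟨i, a⟩ : Σ i, α i) ∈ F := by
      intro i
      by_cases h : ∃ a, (⟨i, a⟩ : Σ i, α i) ∈ F
      · obtain ⟨a, ha⟩ := h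
        refine ⟨some a, fun b => ⟨fun hab => Option.some_injective _ hab ▸ ha, fun hb => ?_⟩⟩
        rw [sigma_mk_injective (hF ha hb rfl)]
      · simp only [not_exists] at h
        exact ⟨none, fun a => by simp [h a]⟩
    choose g hg using this
    exact ⟨g, by ext x; simp [hg]⟩
  · rintro ⟨g, rfl⟩ ⟨i, a⟩ ha ⟨j, b⟩ hb (rfl : i = j)
    simp_all

theorem exists_injOn_fst_image_eq_univ_superset [DecidableEq ι] [∀ i, Nonempty (α i)]
    {F : Finset (Σ i, α i)} (hF : Set.InjOn Sigma.fst (F : Set (Σ i, α i))) :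
    ∃ T : Finset (Σ i, α i), Set.InjOn Sigma.fst (T : Set (Σ i, α i)) ∧
      T.image Sigma.fst = univ ∧ F ⊆ T := by
  obtain ⟨g, rfl⟩ := (injOn_fst_iff_exists_graphOf_eq F).1 hF
  refine ⟨graphOf fun i => some ((g i).getD (Classical.arbitrary _)),
    (injOn_fst_iff_exists_graphOf_eq _).2 ⟨_, rfl⟩, by simp [image_fst_graphOf], fun x hx => ?_⟩
  simp_all

section Count

variable [DecidableEq ι] [∀ i, Fintype (α i)] [∀ i, DecidableEq (α i)]

theorem card_filter_injOn_fst_image_eq (A : Finset ι) :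
    #{F : Finset (Σ i, α i) | Set.InjOn Sigma.fst (F : Set (Σ i, α i)) ∧
      F.image Sigma.fst = A} = ∏ i ∈ A, Fintype.card (α i) := by
  set S : ∀ i, Finset (Option (α i)) := fun i => if i ∈ A then univ.map .some else {none}
  have hS : ∀ g, g ∈ Fintype.piFinset S ↔ ∀ i, ((g i).isSome ↔ i ∈ A) := by
    intro g
    refine Fintype.mem_piFinset.trans (forall_congr' fun i => ?_)
    by_cases hi : i ∈ A <;> cases g i <;> simp [S, hi]
  have hfilter : univ.filter (fun F : Finset (Σ i, α i) =>
      Set.InjOn Sigma.fst (F : Set (Σ i, α i)) ∧ F.image Sigma.fst = A) =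
        (Fintype.piFinset S).map ⟨graphOf, graphOf_injective⟩ := by
    ext F
    simp only [mem_filter, mem_univ, true_and, mem_map, Function.Embedding.coeFn_mk, hS,
      injOn_fst_iff_exists_graphOf_eq]
    constructor
    · rintro ⟨⟨g, rfl⟩, hA⟩
      refine ⟨g, fun i => ?_, rfl⟩
      simp [← hA, image_fst_graphOf]
    · rintro ⟨g, hg, rfl⟩
      refine ⟨⟨g, rfl⟩, ?_⟩
      ext i
      simp [image_fst_graphOf, hg]
  rw [hfilter, card_map, Fintype.card_piFinset]
  simp [S, apply_ite Finset.card, prod_ite_mem]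

theorem card_filter_injOn_fst_card_eq (m : ℕ) :
    #{F : Finset (Σ i, α i) | Set.InjOn Sigma.fst (F : Set (Σ i, α i)) ∧ #F = m} =
      ∑ A ∈ univ.powersetCard m, ∏ i ∈ A, Fintype.card (α i) := by
  rw [card_eq_sum_card_fiberwise (f := image Sigma.fst) (t := univ.powersetCard m)]
  · refine sum_congr rfl fun A hA => ?_
    rw [← card_filter_injOn_fst_image_eq, filter_filter]
    congr 1
    ext F
    simp only [mem_filter, mem_univ, true_and, and_assoc]
    refine and_congr_right fun hF => ⟨And.right, fun hFA => ⟨?_, hFA⟩⟩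
    rw [← card_image_of_injOn hF, hFA, (mem_powersetCard.1 hA).2]
  · intro F hF
    simp only [coe_filter, mem_univ, true_and, Set.mem_ofPred_eq] at hF
    simpa [card_image_of_injOn hF.1] using hF.2

end Count

end Sigma

section Multigraph

open SimpleGraph

variable {V ι : Type} [Fintype ι] [DecidableEq ι] {α : ι → Type} {p : ι → Sym2 V}

theorem isSpanningTree_fst_iff (hp : Function.Injective p) (hpd : ∀ i, ¬ (p i).IsDiag)
    (htree : (fromEdgeSet (Set.range p)).IsTree) (T : Finset (Σ i, α i)) :
    IsSpanningTree (fun e => p e.1) T ↔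
      Set.InjOn Sigma.fst (T : Set (Σ i, α i)) ∧ T.image Sigma.fst = univ := by
  rw [isSpanningTree_iff_image_eq (ends := fun e : Σ i, α i => p e.1)
    (fun e => Set.mem_range_self e.1) (Set.forall_mem_range.2 hpd) htree]
  refine and_congr ⟨Set.InjOn.of_comp, hp.comp_injOn⟩ ?_
  rw [← Set.image_univ, show (fun e : Σ i, α i => p e.1) = p ∘ Sigma.fst from rfl,
    Set.image_comp, hp.image_injective.eq_iff, ← coe_image, coe_eq_univ]

theorem exists_isSpanningTree_superset_iff [∀ i, Nonempty (α i)] (hp : Function.Injective p)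
    (hpd : ∀ i, ¬ (p i).IsDiag) (htree : (fromEdgeSet (Set.range p)).IsTree)
    (F : Finset (Σ i, α i)) :
    (∃ T, IsSpanningTree (fun e => p e.1) T ∧ F ⊆ T) ↔
      Set.InjOn Sigma.fst (F : Set (Σ i, α i)) := by
  simp only [isSpanningTree_fst_iff hp hpd htree]
  constructor
  · rintro ⟨T, ⟨hT, -⟩, hFT⟩
    exact hT.mono (coe_subset.2 hFT)
  · intro hF
    obtain ⟨T, hT, hTu, hFT⟩ := Sigma.exists_injOn_fst_image_eq_univ_superset hF
    exact ⟨T, ⟨hT, hTu⟩, hFT⟩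

end Multigraph

theorem stmt10_general {V : Type} (k : ℕ) (t : Fin k → ℕ) (ht : ∀ h, 1 ≤ t h)
    (p : Fin k → Sym2 V) (hp : Function.Injective p) (hpd : ∀ h, ¬ (p h).IsDiag)
    (htree : (SimpleGraph.fromEdgeSet (Set.range p)).IsTree) :
    Nat.card {T : Finset (Σ h : Fin k, Fin (t h)) //
        IsSpanningTree (fun e => p e.1) T} = ∏ h, t h ∧
    (∀ F : Finset (Σ h : Fin k, Fin (t h)),
      (∃ T, IsSpanningTree (fun e => p e.1) T ∧ F ⊆ T) ↔
      ∀ h : Fin k, (F.filter (fun e => e.1 = h)).card ≤ 1) ∧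
    (∑ i ∈ Finset.range k, (-1 : ℤ) ^ i *
        Nat.card {F : Finset (Σ h : Fin k, Fin (t h)) //
          (∃ T, IsSpanningTree (fun e => p e.1) T ∧ F ⊆ T) ∧ F.card = i + 1}) =
      ∑ i ∈ Finset.range k, (-1 : ℤ) ^ i *
        ∑ A ∈ Finset.univ.powersetCard (i + 1), ∏ h ∈ A, (t h : ℤ) := by
  classical
  have : ∀ h, Nonempty (Fin (t h)) := fun h => Fin.pos_iff_nonempty.1 (ht h)
  have hface := exists_isSpanningTree_superset_iff hp hpd htree (α := fun h => Fin (t h))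
  refine ⟨?_, fun F => (hface F).trans injOn_iff_forall_card_filter_le_one, ?_⟩
  · simp only [isSpanningTree_fst_iff hp hpd htree, Nat.card_eq_fintype_card,
      Fintype.card_subtype]
    rw [Sigma.card_filter_injOn_fst_image_eq]
    simp
  · refine sum_congr rfl fun i _ => ?_
    simp only [hface, Nat.card_eq_fintype_card, Fintype.card_subtype]
    rw [Sigma.card_filter_injOn_fst_card_eq]
    simp

/-- A multigraph whose underlying simple graph is a tree with `k` edges of
endpoints `p h`, the `h`-th tree edge being a parallel class of size `t h ≥ 1`.
Then: the number of spanning trees is `∏ t h`; the faces of the spanning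
simplicial complex are exactly the subsets with at most one edge from each class
(the join of `k` discrete sets of sizes `t h`); and the Euler characteristic is
`∑_{i=0}^{k-1} (-1)^i e_{i+1}(t₁,…,t_k)` with `e_j` the elementary symmetric
polynomials. -/
theorem stmt10 {V : Type} [Fintype V] (k : ℕ) (t : Fin k → ℕ) (ht : ∀ h, 1 ≤ t h)
    (p : Fin k → Sym2 V) (hp : Function.Injective p) (hpd : ∀ h, ¬ (p h).IsDiag)
    (htree : (SimpleGraph.fromEdgeSet (Set.range p)).IsTree) :
    Nat.card {T : Finset (Σ h : Fin k, Fin (t h)) //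
        IsSpanningTree (fun e => p e.1) T} = ∏ h, t h ∧
    (∀ F : Finset (Σ h : Fin k, Fin (t h)),
      (∃ T, IsSpanningTree (fun e => p e.1) T ∧ F ⊆ T) ↔
      ∀ h : Fin k, (F.filter (fun e => e.1 = h)).card ≤ 1) ∧
    (∑ i ∈ Finset.range k, (-1 : ℤ) ^ i *
        Nat.card {F : Finset (Σ h : Fin k, Fin (t h)) //
          (∃ T, IsSpanningTree (fun e => p e.1) T ∧ F ⊆ T) ∧ F.card = i + 1}) =
      ∑ i ∈ Finset.range k, (-1 : ℤ) ^ i *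
        ∑ A ∈ Finset.univ.powersetCard (i + 1), ∏ h ∈ A, (t h : ℤ) :=
  stmt10_general k t ht p hp hpd htree
end
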